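/- Let g̃ ∈ I². Then { x ∈ GL₂(K) : x⁻¹·g̃·x ∈ I² } = I¹ ∪ I². Consequently, the set of left cosets x·I¹ (for x ∈ GL₂(K)) such that x⁻¹·g̃·x ∈ I² consists of exactly two elements, namely I¹ and π·I¹ where π = [[0,1],[ε,0]]. -/

import Mathlib

/-!
Conjugation by `π` preserves the group `I¹`, and `I² = π I¹`; hence `I¹ ∪ I²` is a group
normalizing `I²`, which gives the inclusion `⊇` and the two cosets `I¹` and `π I¹`.
Conversely, let `g` and `y = x⁻¹ g x` lie in `I²`; they have the same `m`, since `v (det) = 2m + 1`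
on `I²`. Comparing valuations in the entries `(0,1)` and `(0,0)` of `g x = x y` shows `x ∈ I¹`
as soon as `v x₁₁ ≤ v x₀₁`. Otherwise the same argument applies to `π⁻¹ x`, which conjugates
`π⁻¹ g π ∈ I²` into `y`, so `x ∈ π I¹ = I²`.
-/

noncomputable section

/-- The valuation `v` on `K = k((ε))`, with `v 0 = ∞`. -/
def lv {k : Type*} [Field k] (x : LaurentSeries k) : WithTop ℤ := x.orderTop

/-- The uniformizer `ε` of `k((ε))`. -/
def eps (k : Type*) [Field k] : LaurentSeries k := HahnSeries.single (1 : ℤ) 1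

/-- The set `I¹` of matrices `[[a,b],[c,d]]` with `v a = v d = m`, `v b ≥ m`, `v c > m`
for some `m ∈ ℤ`. -/
def I1 (k : Type*) [Field k] : Set (Matrix (Fin 2) (Fin 2) (LaurentSeries k)) :=
  {g | ∃ m : ℤ, lv (g 0 0) = (m : WithTop ℤ) ∧ lv (g 1 1) = (m : WithTop ℤ) ∧
    (m : WithTop ℤ) ≤ lv (g 0 1) ∧ (m : WithTop ℤ) < lv (g 1 0)}

/-- The set `I²` of matrices `[[c,d],[a,b]]` with `v a = m+1`, `v d = m`, `v b ≥ m+1`,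
`v c ≥ m+1` for some `m ∈ ℤ`. -/
def I2 (k : Type*) [Field k] : Set (Matrix (Fin 2) (Fin 2) (LaurentSeries k)) :=
  {g | ∃ m : ℤ, lv (g 1 0) = ((m + 1 : ℤ) : WithTop ℤ) ∧ lv (g 0 1) = (m : WithTop ℤ) ∧
    ((m + 1 : ℤ) : WithTop ℤ) ≤ lv (g 1 1) ∧ ((m + 1 : ℤ) : WithTop ℤ) ≤ lv (g 0 0)}

/-- The matrix `π = [[0,1],[ε,0]]`. -/
def piMat (k : Type*) [Field k] : Matrix (Fin 2) (Fin 2) (LaurentSeries k) :=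
  !![0, 1; eps k, 0]

open Matrix

section Valuation

variable {k : Type*} [Field k] {x y : LaurentSeries k}

lemma lv_eq_addVal (x : LaurentSeries k) : lv x = HahnSeries.addVal ℤ k x :=
  HahnSeries.addVal_apply.symm

lemma lv_eq_top : lv x = ⊤ ↔ x = 0 := HahnSeries.orderTop_eq_top

lemma ne_zero_of_lv_eq {n : ℤ} (h : lv x = n) : x ≠ 0 := by
  rintro rfl
  exact WithTop.top_ne_coe ((lv_eq_top.2 rfl).symm.trans h)

lemma lv_mul (x y : LaurentSeries k) : lv (x * y) = lv x + lv y := HahnSeries.orderTop_mul x y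

lemma lv_neg (x : LaurentSeries k) : lv (-x) = lv x := HahnSeries.orderTop_neg

lemma lv_eps : lv (eps k) = (1 : ℤ) := HahnSeries.orderTop_single one_ne_zero

lemma lv_inv {n : ℤ} (h : lv x = n) : lv x⁻¹ = (-n : ℤ) := by
  rw [lv_eq_addVal, AddValuation.map_inv, ← lv_eq_addVal, h]
  rfl

lemma le_lv_add {n : WithTop ℤ} (hx : n ≤ lv x) (hy : n ≤ lv y) : n ≤ lv (x + y) := by
  rw [lv_eq_addVal] at *
  exact AddValuation.map_le_add _ hx hy

lemma le_lv_sub {n : WithTop ℤ} (hx : n ≤ lv x) (hy : n ≤ lv y) : n ≤ lv (x - y) := by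
  rw [lv_eq_addVal] at *
  exact AddValuation.map_le_sub _ hx hy

lemma lv_sub_of_ne (h : lv x ≠ lv y) : lv (x - y) = min (lv x) (lv y) := by
  rw [lv_eq_addVal, lv_eq_addVal] at h
  rw [sub_eq_add_neg, lv_eq_addVal, lv_eq_addVal, lv_eq_addVal,
    AddValuation.map_add_of_distinct_val _ (by rwa [AddValuation.map_neg]), AddValuation.map_neg]

lemma lv_add_of_eq_of_lt {n : ℤ} (hx : lv x = n) (hy : (n : WithTop ℤ) < lv y) :
    lv (x + y) = n :=
  (HahnSeries.orderTop_add_eq_left (x := x) (y := y) (by rwa [← hx] at hy)).trans hx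

lemma lv_add_of_lt_of_eq {n : ℤ} (hx : (n : WithTop ℤ) < lv x) (hy : lv y = n) :
    lv (x + y) = n :=
  add_comm y x ▸ lv_add_of_eq_of_lt hy hx

lemma lv_sub_of_eq_of_lt {n : ℤ} (hx : lv x = n) (hy : (n : WithTop ℤ) < lv y) :
    lv (x - y) = n := by
  rw [lv_sub_of_ne (hx ▸ hy).ne, hx, min_eq_left hy.le]

lemma lv_sub_of_lt_of_eq {n : ℤ} (hx : (n : WithTop ℤ) < lv x) (hy : lv y = n) :
    lv (x - y) = n := by
  rw [lv_sub_of_ne (hy ▸ hx).ne', hy, min_eq_right hx.le]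

lemma lv_mul_of_eq {a b n : ℤ} (hx : lv x = a) (hy : lv y = b) (h : a + b = n) :
    lv (x * y) = n := by
  rw [lv_mul, hx, hy, ← h]
  rfl

lemma le_lv_mul {a b n : ℤ} (hx : (a : WithTop ℤ) ≤ lv x) (hy : (b : WithTop ℤ) ≤ lv y)
    (h : n ≤ a + b) : (n : WithTop ℤ) ≤ lv (x * y) :=
  calc (n : WithTop ℤ) ≤ a + b := WithTop.coe_le_coe.2 h
    _ ≤ lv (x * y) := lv_mul x y ▸ add_le_add hx hy

lemma lt_lv_mul {a b n : ℤ} (hx : (a : WithTop ℤ) ≤ lv x) (hy : (b : WithTop ℤ) ≤ lv y)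
    (h : n < a + b) : (n : WithTop ℤ) < lv (x * y) :=
  (WithTop.coe_lt_coe.2 h).trans_le (le_lv_mul hx hy le_rfl)

lemma coe_lt_iff_add_one_le {m : ℤ} {c : WithTop ℤ} :
    (m : WithTop ℤ) < c ↔ ((m + 1 : ℤ) : WithTop ℤ) ≤ c := by
  induction c with
  | top => simp
  | coe c => norm_cast

lemma eq_top_of_coe_add_one_add_le {m : ℤ} {t : WithTop ℤ}
    (h : ((m + 1 : ℤ) : WithTop ℤ) + t ≤ m + t) : t = ⊤ := by
  induction t with
  | top => rfl
  | coe t =>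
    norm_cast at h
    omega

end Valuation

lemma mul_apply_fin_two {R : Type*} [NonUnitalNonAssocSemiring R] (A B : Matrix (Fin 2) (Fin 2) R)
    (i j : Fin 2) : (A * B) i j = A i 0 * B 0 j + A i 1 * B 1 j := by
  simp [mul_apply, Fin.sum_univ_two]

section Iwahori

def I1At (k : Type*) [Field k] (m : ℤ) : Set (Matrix (Fin 2) (Fin 2) (LaurentSeries k)) :=
  {x | lv (x 0 0) = m ∧ lv (x 1 1) = m ∧ (m : WithTop ℤ) ≤ lv (x 0 1) ∧
    ((m + 1 : ℤ) : WithTop ℤ) ≤ lv (x 1 0)}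

def I2At (k : Type*) [Field k] (m : ℤ) : Set (Matrix (Fin 2) (Fin 2) (LaurentSeries k)) :=
  {x | lv (x 1 0) = ((m + 1 : ℤ) : WithTop ℤ) ∧ lv (x 0 1) = m ∧
    ((m + 1 : ℤ) : WithTop ℤ) ≤ lv (x 1 1) ∧ ((m + 1 : ℤ) : WithTop ℤ) ≤ lv (x 0 0)}

variable {k : Type*} [Field k] {x y : Matrix (Fin 2) (Fin 2) (LaurentSeries k)} {m : ℤ}

lemma mem_I1_iff : x ∈ I1 k ↔ ∃ m, x ∈ I1At k m := by
  simp only [I1, I1At, Set.mem_ofPred_eq, coe_lt_iff_add_one_le]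

lemma lv_det_of_mem_I1At (hx : x ∈ I1At k m) : lv x.det = (2 * m : ℤ) := by
  obtain ⟨h00, h11, h01, h10⟩ := hx
  rw [det_fin_two]
  exact lv_sub_of_eq_of_lt (lv_mul_of_eq h00 h11 (by ring)) (lt_lv_mul h01 h10 (by omega))

lemma lv_det_of_mem_I2At (hx : x ∈ I2At k m) : lv x.det = (2 * m + 1 : ℤ) := by
  obtain ⟨h10, h01, h11, h00⟩ := hx
  rw [det_fin_two]
  exact lv_sub_of_lt_of_eq (lt_lv_mul h00 h11 (by omega)) (lv_mul_of_eq h01 h10 (by ring))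

lemma isUnit_of_mem_I1 (hx : x ∈ I1 k) : IsUnit x := by
  obtain ⟨m, hm⟩ := mem_I1_iff.1 hx
  exact (isUnit_iff_isUnit_det x).2 (ne_zero_of_lv_eq (lv_det_of_mem_I1At hm)).isUnit

lemma one_mem_I1 : (1 : Matrix (Fin 2) (Fin 2) (LaurentSeries k)) ∈ I1 k :=
  mem_I1_iff.2 ⟨0, by simp [I1At, HahnSeries.orderTop_one, lv]⟩

lemma mul_mem_I1 (hx : x ∈ I1 k) (hy : y ∈ I1 k) : x * y ∈ I1 k := by
  obtain ⟨m, hx00, hx11, hx01, hx10⟩ := mem_I1_iff.1 hx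
  obtain ⟨n, hy00, hy11, hy01, hy10⟩ := mem_I1_iff.1 hy
  refine mem_I1_iff.2 ⟨m + n, ?_, ?_, ?_, ?_⟩ <;> simp only [mul_apply_fin_two]
  · exact lv_add_of_eq_of_lt (lv_mul_of_eq hx00 hy00 rfl) (lt_lv_mul hx01 hy10 (by omega))
  · exact lv_add_of_lt_of_eq (lt_lv_mul hx10 hy01 (by omega)) (lv_mul_of_eq hx11 hy11 rfl)
  · exact le_lv_add (le_lv_mul hx00.ge hy01 le_rfl) (le_lv_mul hx01 hy11.ge le_rfl)
  · exact le_lv_add (le_lv_mul hx10 hy00.ge (by omega)) (le_lv_mul hx11.ge hy10 (by omega))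

lemma inv_mem_I1 (hx : x ∈ I1 k) : x⁻¹ ∈ I1 k := by
  obtain ⟨m, hm⟩ := mem_I1_iff.1 hx
  have hdet : lv x.det⁻¹ = (-(2 * m) : ℤ) := lv_inv (lv_det_of_mem_I1At hm)
  obtain ⟨h00, h11, h01, h10⟩ := hm
  rw [inv_def, adjugate_fin_two, Ring.inverse_eq_inv]
  refine mem_I1_iff.2 ⟨-m, ?_, ?_, ?_, ?_⟩ <;> simp only [Matrix.smul_apply, of_apply, cons_val',
    cons_val_zero, cons_val_one, cons_val_fin_one, smul_eq_mul, mul_neg, lv_neg]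
  · exact lv_mul_of_eq hdet h11 (by ring)
  · exact lv_mul_of_eq hdet h00 (by ring)
  · exact le_lv_mul hdet.ge h01 (by omega)
  · exact le_lv_mul hdet.ge h10 (by omega)

end Iwahori

section Pi

variable {k : Type*} [Field k] {B x : Matrix (Fin 2) (Fin 2) (LaurentSeries k)}

lemma eps_ne_zero : eps k ≠ 0 := HahnSeries.single_ne_zero one_ne_zero

lemma piMat_left_inv : !![0, (eps k)⁻¹; 1, 0] * piMat k = 1 := by
  simp [piMat, one_fin_two, eps_ne_zero]

lemma inv_piMat : (piMat k)⁻¹ = !![0, (eps k)⁻¹; 1, 0] := inv_eq_left_inv piMat_left_inv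

lemma isUnit_det_piMat : IsUnit (piMat k).det := isUnit_det_of_left_inverse piMat_left_inv

lemma piMat_mul (B : Matrix (Fin 2) (Fin 2) (LaurentSeries k)) :
    piMat k * B = !![B 1 0, B 1 1; eps k * B 0 0, eps k * B 0 1] := by
  ext i j
  fin_cases i <;> fin_cases j <;> simp [piMat, mul_apply_fin_two]

lemma inv_piMat_mul (x : Matrix (Fin 2) (Fin 2) (LaurentSeries k)) :
    (piMat k)⁻¹ * x = !![(eps k)⁻¹ * x 1 0, (eps k)⁻¹ * x 1 1; x 0 0, x 0 1] := by
  ext i j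
  fin_cases i <;> fin_cases j <;> simp [inv_piMat, mul_apply_fin_two]

lemma inv_piMat_mul_mul_piMat (B : Matrix (Fin 2) (Fin 2) (LaurentSeries k)) :
    (piMat k)⁻¹ * B * piMat k = !![B 1 1, (eps k)⁻¹ * B 1 0; B 0 1 * eps k, B 0 0] := by
  rw [inv_piMat_mul]
  ext i j : 2
  fin_cases i <;> fin_cases j <;> simp [piMat, mul_apply_fin_two]
  rw [mul_comm, ← mul_assoc, mul_inv_cancel₀ eps_ne_zero, one_mul]

lemma piMat_mul_mem_I2 (hB : B ∈ I1 k) : piMat k * B ∈ I2 k := by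
  obtain ⟨m, h00, h11, h01, h10⟩ := mem_I1_iff.1 hB
  rw [piMat_mul]
  exact ⟨m, lv_mul_of_eq lv_eps h00 (by ring), h11, le_lv_mul lv_eps.ge h01 (by omega), h10⟩

lemma inv_piMat_mul_mem_I1 (hx : x ∈ I2 k) : (piMat k)⁻¹ * x ∈ I1 k := by
  obtain ⟨m, h10, h01, h11, h00⟩ := hx
  rw [inv_piMat_mul]
  exact mem_I1_iff.2 ⟨m, lv_mul_of_eq (lv_inv lv_eps) h10 (by ring), h01,
    le_lv_mul (lv_inv lv_eps).ge h11 (by omega), h00⟩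

lemma inv_piMat_mul_mul_piMat_mem_I1 (hB : B ∈ I1 k) : (piMat k)⁻¹ * B * piMat k ∈ I1 k := by
  obtain ⟨m, h00, h11, h01, h10⟩ := mem_I1_iff.1 hB
  rw [inv_piMat_mul_mul_piMat]
  exact mem_I1_iff.2 ⟨m, h11, h00, le_lv_mul (lv_inv lv_eps).ge h10 (by omega),
    le_lv_mul h01 lv_eps.ge le_rfl⟩

end Pi

section Normalizer

variable {k : Type*} [Field k] {A B g x : Matrix (Fin 2) (Fin 2) (LaurentSeries k)}

lemma exists_eq_piMat_mul (hx : x ∈ I2 k) : ∃ B ∈ I1 k, x = piMat k * B :=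
  ⟨_, inv_piMat_mul_mem_I1 hx, (mul_nonsing_inv_cancel_left _ _ isUnit_det_piMat).symm⟩

lemma isUnit_of_mem_I2 (hx : x ∈ I2 k) : IsUnit x := by
  obtain ⟨B, hB, rfl⟩ := exists_eq_piMat_mul hx
  have hpi : IsUnit (piMat k) := (isUnit_iff_isUnit_det _).2 isUnit_det_piMat
  exact hpi.mul (isUnit_of_mem_I1 hB)

lemma piMat_mem_I2 : piMat k ∈ I2 k := by
  simpa only [Matrix.mul_one] using piMat_mul_mem_I2 (one_mem_I1 (k := k))

lemma mul_mem_I2_of_mem_I2_of_mem_I1 (hx : x ∈ I2 k) (hA : A ∈ I1 k) : x * A ∈ I2 k := by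
  obtain ⟨B, hB, rfl⟩ := exists_eq_piMat_mul hx
  rw [Matrix.mul_assoc]
  exact piMat_mul_mem_I2 (mul_mem_I1 hB hA)

lemma mul_piMat_mem_I2 (hB : B ∈ I1 k) : B * piMat k ∈ I2 k := by
  have h : B * piMat k = piMat k * ((piMat k)⁻¹ * B * piMat k) := by
    rw [Matrix.mul_assoc (piMat k)⁻¹, mul_nonsing_inv_cancel_left _ _ isUnit_det_piMat]
  rw [h]
  exact piMat_mul_mem_I2 (inv_piMat_mul_mul_piMat_mem_I1 hB)

lemma mul_mem_I2_of_mem_I1_of_mem_I2 (hA : A ∈ I1 k) (hx : x ∈ I2 k) : A * x ∈ I2 k := by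
  obtain ⟨B, hB, rfl⟩ := exists_eq_piMat_mul hx
  rw [← Matrix.mul_assoc]
  exact mul_mem_I2_of_mem_I2_of_mem_I1 (mul_piMat_mem_I2 hA) hB

lemma inv_mul_mul_mem_I2_of_mem_I1 (hx : x ∈ I1 k) (hg : g ∈ I2 k) : x⁻¹ * g * x ∈ I2 k :=
  mul_mem_I2_of_mem_I2_of_mem_I1 (mul_mem_I2_of_mem_I1_of_mem_I2 (inv_mem_I1 hx) hg) hx

lemma inv_piMat_mul_mul_piMat_mem_I2 (hg : g ∈ I2 k) : (piMat k)⁻¹ * g * piMat k ∈ I2 k := by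
  obtain ⟨C, hC, rfl⟩ := exists_eq_piMat_mul hg
  rw [nonsing_inv_mul_cancel_left _ _ isUnit_det_piMat]
  exact mul_mem_I2_of_mem_I1_of_mem_I2 hC piMat_mem_I2

lemma inv_mul_mul_mem_I2_of_mem_I2 (hx : x ∈ I2 k) (hg : g ∈ I2 k) : x⁻¹ * g * x ∈ I2 k := by
  obtain ⟨B, hB, rfl⟩ := exists_eq_piMat_mul hx
  rw [Matrix.mul_inv_rev]
  simpa only [Matrix.mul_assoc] using
    inv_mul_mul_mem_I2_of_mem_I1 hB (inv_piMat_mul_mul_piMat_mem_I2 hg)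

lemma image_mul_I1_of_mem_I1 (hx : x ∈ I1 k) : (fun B => x * B) '' I1 k = I1 k := by
  refine Set.Subset.antisymm (Set.image_subset_iff.2 fun B hB => mul_mem_I1 hx hB) fun C hC => ?_
  have hdet := (isUnit_iff_isUnit_det x).1 (isUnit_of_mem_I1 hx)
  exact ⟨x⁻¹ * C, mul_mem_I1 (inv_mem_I1 hx) hC, mul_nonsing_inv_cancel_left _ _ hdet⟩

lemma image_mul_I1_of_mem_I2 (hx : x ∈ I2 k) :
    (fun B => x * B) '' I1 k = (fun B => piMat k * B) '' I1 k := by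
  obtain ⟨B, hB, rfl⟩ := exists_eq_piMat_mul hx
  calc (fun C => piMat k * B * C) '' I1 k
      = (fun C => piMat k * C) '' ((fun C => B * C) '' I1 k) := by
        simp only [Set.image_image, Matrix.mul_assoc]
    _ = (fun C => piMat k * C) '' I1 k := by rw [image_mul_I1_of_mem_I1 hB]

end Normalizer

section Conjugation

variable {k : Type*} [Field k] {g x y : Matrix (Fin 2) (Fin 2) (LaurentSeries k)} {m n : ℤ}

lemma det_eq_of_mul_eq_mul (hx : IsUnit x.det) (h : g * x = x * y) : g.det = y.det := by
  have hdet := congrArg det h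
  rw [det_mul, det_mul, mul_comm] at hdet
  exact mul_left_cancel₀ hx.ne_zero hdet

lemma eq_of_mem_I2At_of_det_eq (hg : g ∈ I2At k m) (hy : y ∈ I2At k n) (h : g.det = y.det) :
    m = n := by
  have hlv := (lv_det_of_mem_I2At hg).symm.trans (h ▸ lv_det_of_mem_I2At hy)
  have := WithTop.coe_injective hlv
  omega

lemma lv_diag_eq_of_mul_eq_mul (hg : g ∈ I2At k m) (hy : y ∈ I2At k m) (hgx : g * x = x * y)
    (hle : lv (x 1 1) ≤ lv (x 0 1)) : lv (x 0 0) = lv (x 1 1) := by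
  obtain ⟨-, hg01, -, hg00⟩ := hg
  obtain ⟨-, hy01, hy11, -⟩ := hy
  -- Otherwise the sides of `hentry` have valuations `m + min (v x₁₁) (v x₀₀)` and `> m + v x₁₁`.
  by_contra hne
  have hentry : g 0 1 * x 1 1 - x 0 0 * y 0 1 = x 0 1 * y 1 1 - g 0 0 * x 0 1 := by
    have := congrFun (congrFun hgx 0) 1
    simp only [mul_apply_fin_two] at this
    linear_combination this
  have hlow : ((m + 1 : ℤ) : WithTop ℤ) + lv (x 1 1) ≤ lv (x 0 1 * y 1 1 - g 0 0 * x 0 1) := by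
    refine le_lv_sub ?_ ?_ <;> rw [lv_mul]
    · rw [add_comm]
      exact add_le_add hle hy11
    · exact add_le_add hg00 hle
  have hne' : lv (g 0 1 * x 1 1) ≠ lv (x 0 0 * y 0 1) := by
    rw [lv_mul, lv_mul, hg01, hy01, add_comm (lv (x 0 0))]
    exact fun h => hne (WithTop.add_left_cancel WithTop.coe_ne_top h).symm
  have hval : lv (g 0 1 * x 1 1 - x 0 0 * y 0 1) = m + min (lv (x 1 1)) (lv (x 0 0)) := by
    rw [lv_sub_of_ne hne', lv_mul, lv_mul, hg01, hy01, add_comm (lv (x 0 0)), min_add_add_left]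
  have hmin : min (lv (x 1 1)) (lv (x 0 0)) = ⊤ := by
    refine eq_top_of_coe_add_one_add_le (m := m) ?_
    calc ((m + 1 : ℤ) : WithTop ℤ) + min (lv (x 1 1)) (lv (x 0 0))
        ≤ ((m + 1 : ℤ) : WithTop ℤ) + lv (x 1 1) := add_le_add_right (min_le_left _ _) _
      _ ≤ m + min (lv (x 1 1)) (lv (x 0 0)) := hval ▸ hentry ▸ hlow
  exact hne ((min_eq_top.1 hmin).2.trans (min_eq_top.1 hmin).1.symm)

lemma mem_I1_of_mul_eq_mul_of_mem_I2At (hg : g ∈ I2At k m) (hy : y ∈ I2At k m) (hx : x.det ≠ 0)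
    (hgx : g * x = x * y) (hle : lv (x 1 1) ≤ lv (x 0 1)) : x ∈ I1 k := by
  have hdiag := lv_diag_eq_of_mul_eq_mul hg hy hgx hle
  obtain ⟨-, hg01, -, hg00⟩ := hg
  obtain ⟨hy10, -, -, hy00⟩ := hy
  obtain ⟨p, hp⟩ : ∃ p : ℤ, lv (x 0 0) = p := by
    refine (WithTop.ne_top_iff_exists.1 fun htop => hx ?_).imp fun _ => Eq.symm
    have h01 : x 0 1 = 0 := lv_eq_top.1 (top_le_iff.1 (htop ▸ hdiag ▸ hle))
    rw [det_fin_two, lv_eq_top.1 htop, h01]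
    ring
  have h01 : (p : WithTop ℤ) ≤ lv (x 0 1) := (hp.symm.trans hdiag).trans_le hle
  have h10 : ((p + 1 : ℤ) : WithTop ℤ) ≤ lv (x 1 0) := by
    have hentry : g 0 1 * x 1 0 = x 0 0 * y 0 0 + x 0 1 * y 1 0 - g 0 0 * x 0 0 := by
      have := congrFun (congrFun hgx 0) 0
      simp only [mul_apply_fin_two] at this
      linear_combination this
    have hlow : ((m + (p + 1) : ℤ) : WithTop ℤ) ≤ lv (g 0 1 * x 1 0) := by
      rw [hentry]
      exact le_lv_sub (le_lv_add (le_lv_mul hp.ge hy00 (by omega))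
        (le_lv_mul h01 hy10.ge (by omega))) (le_lv_mul hg00 hp.ge (by omega))
    rwa [lv_mul, hg01, WithTop.coe_add, WithTop.add_le_add_iff_left WithTop.coe_ne_top] at hlow
  exact mem_I1_iff.2 ⟨p, hp, hdiag.symm.trans hp, h01, h10⟩

lemma mem_I1_of_mul_eq_mul (hg : g ∈ I2 k) (hy : y ∈ I2 k) (hx : IsUnit x.det)
    (hgx : g * x = x * y) (hle : lv (x 1 1) ≤ lv (x 0 1)) : x ∈ I1 k := by
  obtain ⟨m, hgm⟩ := hg
  obtain ⟨n, hyn⟩ := hy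
  obtain rfl := eq_of_mem_I2At_of_det_eq hgm hyn (det_eq_of_mul_eq_mul hx hgx)
  exact mem_I1_of_mul_eq_mul_of_mem_I2At hgm hyn hx.ne_zero hgx hle

lemma mem_I1_union_I2_of_inv_mul_mul_mem_I2 (hg : g ∈ I2 k) (hx : IsUnit x)
    (hconj : x⁻¹ * g * x ∈ I2 k) : x ∈ I1 k ∪ I2 k := by
  have hdet := (isUnit_iff_isUnit_det x).1 hx
  have hgx : g * x = x * (x⁻¹ * g * x) := by
    rw [Matrix.mul_assoc, mul_nonsing_inv_cancel_left _ _ hdet]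
  generalize x⁻¹ * g * x = y at hconj hgx
  rcases le_or_gt (lv (x 1 1)) (lv (x 0 1)) with hle | hlt
  · exact Or.inl (mem_I1_of_mul_eq_mul hg hconj hdet hgx hle)
  right
  rw [← mul_nonsing_inv_cancel_left _ x isUnit_det_piMat]
  refine piMat_mul_mem_I2 (mem_I1_of_mul_eq_mul (inv_piMat_mul_mul_piMat_mem_I2 hg) hconj ?_ ?_ ?_)
  · rw [det_mul]
    exact (isUnit_nonsing_inv_det _ isUnit_det_piMat).mul hdet
  · simp only [Matrix.mul_assoc, mul_nonsing_inv_cancel_left _ _ isUnit_det_piMat, hgx]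
  · obtain ⟨q, hq⟩ := WithTop.ne_top_iff_exists.1 hlt.ne_top
    rw [inv_piMat_mul]
    exact hq ▸ le_lv_mul (lv_inv lv_eps).ge (coe_lt_iff_add_one_le.1 (hq ▸ hlt)) (by omega)

end Conjugation

lemma setOf_inv_mul_mul_mem_I2 {k : Type*} [Field k] {g : Matrix (Fin 2) (Fin 2) (LaurentSeries k)}
    (hg : g ∈ I2 k) : {x | IsUnit x ∧ x⁻¹ * g * x ∈ I2 k} = I1 k ∪ I2 k := by
  ext x
  refine ⟨fun ⟨hx, hconj⟩ => mem_I1_union_I2_of_inv_mul_mul_mem_I2 hg hx hconj, ?_⟩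
  rintro (hx | hx)
  · exact ⟨isUnit_of_mem_I1 hx, inv_mul_mul_mem_I2_of_mem_I1 hx hg⟩
  · exact ⟨isUnit_of_mem_I2 hx, inv_mul_mul_mem_I2_of_mem_I2 hx hg⟩

lemma I1_ne_image_piMat_mul {k : Type*} [Field k] : I1 k ≠ (fun B => piMat k * B) '' I1 k := by
  intro h
  obtain ⟨m, h00, -⟩ : piMat k ∈ I1 k := h ▸ ⟨1, one_mem_I1, mul_one _⟩
  rw [show piMat k 0 0 = 0 from rfl, lv_eq_top.2 rfl] at h00
  exact WithTop.top_ne_coe h00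

theorem statement7_general (k : Type*) [Field k]
    (g : Matrix (Fin 2) (Fin 2) (LaurentSeries k)) (hg : g ∈ I2 k) :
    {x : Matrix (Fin 2) (Fin 2) (LaurentSeries k) | IsUnit x ∧ x⁻¹ * g * x ∈ I2 k}
      = I1 k ∪ I2 k ∧
    {S : Set (Matrix (Fin 2) (Fin 2) (LaurentSeries k)) |
        ∃ x : Matrix (Fin 2) (Fin 2) (LaurentSeries k),
          IsUnit x ∧ x⁻¹ * g * x ∈ I2 k ∧ S = (fun B => x * B) '' I1 k}
      = {I1 k, (fun B => piMat k * B) '' I1 k} ∧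
    I1 k ≠ (fun B => piMat k * B) '' I1 k := by
  have hset := setOf_inv_mul_mul_mem_I2 hg
  refine ⟨hset, Set.ext fun S => ⟨?_, ?_⟩, I1_ne_image_piMat_mul⟩
  · rintro ⟨x, hx, hconj, rfl⟩
    rcases (hset ▸ ⟨hx, hconj⟩ : x ∈ I1 k ∪ I2 k) with h | h
    · exact Or.inl (image_mul_I1_of_mem_I1 h)
    · exact Or.inr (image_mul_I1_of_mem_I2 h)
  · rintro (rfl | rfl)
    · exact ⟨1, isUnit_one, by simpa using hg, (image_mul_I1_of_mem_I1 one_mem_I1).symm⟩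
    · obtain ⟨hu, hconj⟩ : piMat k ∈ {x | IsUnit x ∧ x⁻¹ * g * x ∈ I2 k} :=
        hset ▸ Or.inr piMat_mem_I2
      exact ⟨piMat k, hu, hconj, rfl⟩

theorem statement7 (k : Type*) [Field k] [IsAlgClosed k]
    (g : Matrix (Fin 2) (Fin 2) (LaurentSeries k)) (hg : g ∈ I2 k) :
    {x : Matrix (Fin 2) (Fin 2) (LaurentSeries k) | IsUnit x ∧ x⁻¹ * g * x ∈ I2 k}
      = I1 k ∪ I2 k ∧
    {S : Set (Matrix (Fin 2) (Fin 2) (LaurentSeries k)) |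
        ∃ x : Matrix (Fin 2) (Fin 2) (LaurentSeries k),
          IsUnit x ∧ x⁻¹ * g * x ∈ I2 k ∧ S = (fun B => x * B) '' I1 k}
      = {I1 k, (fun B => piMat k * B) '' I1 k} ∧
    I1 k ≠ (fun B => piMat k * B) '' I1 k :=
  statement7_general k g hg
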